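/- arXiv:1012.1768 — 2 statements merged into one kernel-verified Lean document; each statement's English description precedes it below -/
import Mathlib

section
/- Invariance of Sigma under the matrix Piola transform: let h_1, h_2, h_3 > 0, b in R^3, B = diag(h_1, h_2, h_3), and F(y) = B y + b. Given a symmetric 3x3 polynomial matrix field tau_hat, define the matrix field tau by tau(x) = B * tau_hat(F^{-1}(x)) * B^T. Then tau is a symmetric polynomial matrix field, and tau belongs to Sigma = {sigma in S_2 : div sigma in V} if and only if tau_hat belongs to Sigma. -/
open MvPolynomial

noncomputable section

/-- Polynomials in the three variables `x₁, x₂, x₃` with real coefficients. -/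
abbrev Poly3 := MvPolynomial (Fin 3) ℝ

/-- 3×3 matrix fields with polynomial entries. -/
abbrev Mat3 := Matrix (Fin 3) (Fin 3) Poly3

/-- The space `P_{k₁,k₂,k₃}` of polynomials of degree at most `k i` in `x_i` for each `i`. -/
def Pdeg (k : Fin 3 → ℕ) : Submodule ℝ Poly3 where
  carrier := {p | ∀ i, p.degreeOf i ≤ k i}
  zero_mem' := fun i => by simp
  add_mem' := fun {a b} ha hb i =>
    (MvPolynomial.degreeOf_add_le i a b).trans (max_le (ha i) (hb i))
  smul_mem' := fun c p hp i => by
    rw [MvPolynomial.smul_eq_C_mul]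
    exact (MvPolynomial.degreeOf_C_mul_le p i c).trans (hp i)

/-- Row-wise divergence of a matrix field: `(div τ)_p = ∑_q ∂τ_{pq}/∂x_q`. -/
def divRow (τ : Mat3) : Fin 3 → Poly3 := fun p => ∑ q, MvPolynomial.pderiv q (τ p q)

lemma divRow_add (a b : Mat3) (p : Fin 3) :
    divRow (a + b) p = divRow a p + divRow b p := by
  simp [divRow, Matrix.add_apply, Finset.sum_add_distrib]

lemma divRow_smul (c : ℝ) (a : Mat3) (p : Fin 3) :
    divRow (c • a) p = c • divRow a p := by
  simp [divRow, Matrix.smul_apply, Finset.smul_sum]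

/-- Membership in the space `S₂`: symmetric matrix fields with
`τ₁₁ ∈ P₃₁₁`, `τ₂₂ ∈ P₁₃₁`, `τ₃₃ ∈ P₁₁₃`, `τ₁₂ ∈ P₂₂₁`, `τ₁₃ ∈ P₂₁₂`, `τ₂₃ ∈ P₁₂₂`. -/
def isS2 (τ : Mat3) : Prop :=
  (∀ p q, τ p q = τ q p) ∧
  τ 0 0 ∈ Pdeg ![3,1,1] ∧ τ 1 1 ∈ Pdeg ![1,3,1] ∧ τ 2 2 ∈ Pdeg ![1,1,3] ∧
  τ 0 1 ∈ Pdeg ![2,2,1] ∧ τ 0 2 ∈ Pdeg ![2,1,2] ∧ τ 1 2 ∈ Pdeg ![1,2,2]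

/-- `S₂` as a subspace of polynomial matrix fields. -/
def S2sub : Submodule ℝ Mat3 where
  carrier := {τ | isS2 τ}
  zero_mem' :=
    ⟨fun _ _ => rfl, Submodule.zero_mem _, Submodule.zero_mem _, Submodule.zero_mem _,
      Submodule.zero_mem _, Submodule.zero_mem _, Submodule.zero_mem _⟩
  add_mem' := by
    rintro a b ⟨hs, h1, h2, h3, h4, h5, h6⟩ ⟨hs', h1', h2', h3', h4', h5', h6'⟩
    exact ⟨fun p q => by simp [Matrix.add_apply, hs p q, hs' p q],
      Submodule.add_mem _ h1 h1', Submodule.add_mem _ h2 h2', Submodule.add_mem _ h3 h3',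
      Submodule.add_mem _ h4 h4', Submodule.add_mem _ h5 h5', Submodule.add_mem _ h6 h6'⟩
  smul_mem' := by
    rintro c a ⟨hs, h1, h2, h3, h4, h5, h6⟩
    exact ⟨fun p q => by simp [Matrix.smul_apply, hs p q],
      Submodule.smul_mem _ _ h1, Submodule.smul_mem _ _ h2, Submodule.smul_mem _ _ h3,
      Submodule.smul_mem _ _ h4, Submodule.smul_mem _ _ h5, Submodule.smul_mem _ _ h6⟩

/-- The space `Σ = { τ ∈ S₂ : div τ ∈ V }` where `V = P₀₁₁ × P₁₀₁ × P₁₁₀`. -/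
def SigmaSub : Submodule ℝ Mat3 where
  carrier := {τ | isS2 τ ∧ divRow τ 0 ∈ Pdeg ![0,1,1] ∧ divRow τ 1 ∈ Pdeg ![1,0,1] ∧
    divRow τ 2 ∈ Pdeg ![1,1,0]}
  zero_mem' := by
    refine ⟨S2sub.zero_mem, ?_, ?_, ?_⟩ <;>
      · show divRow 0 _ ∈ _
        simp only [divRow, Matrix.zero_apply, map_zero, Finset.sum_const_zero]
        exact Submodule.zero_mem _
  add_mem' := by
    rintro a b ⟨ha, ha0, ha1, ha2⟩ ⟨hb, hb0, hb1, hb2⟩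
    exact ⟨S2sub.add_mem ha hb,
      by rw [divRow_add]; exact Submodule.add_mem _ ha0 hb0,
      by rw [divRow_add]; exact Submodule.add_mem _ ha1 hb1,
      by rw [divRow_add]; exact Submodule.add_mem _ ha2 hb2⟩
  smul_mem' := by
    rintro c a ⟨ha, ha0, ha1, ha2⟩
    exact ⟨S2sub.smul_mem c ha,
      by rw [divRow_smul]; exact Submodule.smul_mem _ _ ha0,
      by rw [divRow_smul]; exact Submodule.smul_mem _ _ ha1,
      by rw [divRow_smul]; exact Submodule.smul_mem _ _ ha2⟩

/-- Integral of (the evaluation of) a polynomial over the edge `{x_i = a, x_j = b}`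
of the unit cube `[0,1]³`, with respect to the remaining variable. -/
def edgeInt (i j : Fin 3) (a b : ℝ) (f : Poly3) : ℝ :=
  ∫ t in (0:ℝ)..1,
    MvPolynomial.eval (fun m => if m = i then a else if m = j then b else t) f

/-- Integral of (the evaluation of) a polynomial over the face `{x_p = a}` of the unit cube. -/
def faceInt (p : Fin 3) (a : ℝ) (f : Poly3) : ℝ :=
  ∫ s in (0:ℝ)..1, ∫ t in (0:ℝ)..1,
    MvPolynomial.eval (if p = 0 then ![a, s, t] else if p = 1 then ![s, a, t] else ![s, t, a]) f

/-- Integral of (the evaluation of) a polynomial over the unit cube `[0,1]³`. -/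
def cubeInt (f : Poly3) : ℝ :=
  ∫ x in (0:ℝ)..1, ∫ y in (0:ℝ)..1, ∫ z in (0:ℝ)..1, MvPolynomial.eval ![x, y, z] f

/-- `(1,1)` entry of the 2×2 matrix `E_m` in the variables `x_i, x_j` (`m : Fin 4` for `E_{m+1}`). -/
def Ed1 (m : Fin 4) (i j : Fin 3) : Poly3 :=
  if m = 0 then -(C (1/2 : ℝ) * X i ^ 2)
  else if m = 1 then -(C (1/3 : ℝ) * X i ^ 3)
  else if m = 2 then -(X i ^ 2 * X j)
  else -(C (2/3 : ℝ) * X i ^ 3 * X j)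

/-- Off-diagonal entry of the 2×2 matrix `E_m` in the variables `x_i, x_j`. -/
def Eod (m : Fin 4) (i j : Fin 3) : Poly3 :=
  if m = 0 then X i * X j
  else if m = 1 then X i ^ 2 * X j
  else if m = 2 then X i * X j ^ 2
  else X i ^ 2 * X j ^ 2

/-- `(2,2)` entry of the 2×2 matrix `E_m` in the variables `x_i, x_j`. -/
def Ed2 (m : Fin 4) (i j : Fin 3) : Poly3 :=
  if m = 0 then -(C (1/2 : ℝ) * X j ^ 2)
  else if m = 1 then -(X i * X j ^ 2)
  else if m = 2 then -(C (1/3 : ℝ) * X j ^ 3)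
  else -(C (2/3 : ℝ) * X i * X j ^ 3)

/-- The additional shape function `σ^{ij,(k+1)}` (`k : Fin 8`, so `k+1 ∈ {1,…,8}` as in the
paper): for `k+1 = 2m-1` it is `E_m`, for `k+1 = 2m` it is `x_l • E_m`, where `E_m` is placed
in the entries `(i,i), (i,j), (j,i), (j,j)` with zeros in all other entries. -/
def shape (i j l : Fin 3) (k : Fin 8) : Mat3 :=
  fun p q =>
    (if k.val % 2 = 0 then 1 else X l) *
      (if p = i ∧ q = i then Ed1 ⟨k.val / 2, by have := k.isLt; omega⟩ i j
      else if (p = i ∧ q = j) ∨ (p = j ∧ q = i) then Eod ⟨k.val / 2, by have := k.isLt; omega⟩ i j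
      else if p = j ∧ q = j then Ed2 ⟨k.val / 2, by have := k.isLt; omega⟩ i j
      else 0)

/-- The space `span{1, x_i, x_j, x_i², x_j², x_l, x_i x_l, x_j x_l, x_i² x_l, x_j² x_l}`. -/
def ncfSpan (i j l : Fin 3) : Submodule ℝ Poly3 :=
  Submodule.span ℝ
    {1, X i, X j, X i ^ 2, X j ^ 2, X l, X i * X l, X j * X l, X i ^ 2 * X l, X j ^ 2 * X l}

/-- The stress space `Σ_ncf` of the lowest order nonconforming element: symmetric matrix
fields with `σ_ii ∈ P₁₁₁` and `σ_ij = σ_ji` in the 10-dimensional span above. -/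
def SigmaNcf : Submodule ℝ Mat3 where
  carrier := {σ | (∀ p q, σ p q = σ q p) ∧ (∀ i, σ i i ∈ Pdeg ![1,1,1]) ∧
    ∀ i j l : Fin 3, i < j → l ≠ i → l ≠ j → σ i j ∈ ncfSpan i j l}
  zero_mem' :=
    ⟨fun _ _ => rfl, fun _ => Submodule.zero_mem _, fun _ _ _ _ _ _ => Submodule.zero_mem _⟩
  add_mem' := by
    rintro a b ⟨hs, hd, ho⟩ ⟨hs', hd', ho'⟩
    exact ⟨fun p q => by simp [Matrix.add_apply, hs p q, hs' p q],
      fun i => Submodule.add_mem _ (hd i) (hd' i),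
      fun i j l h1 h2 h3 => Submodule.add_mem _ (ho i j l h1 h2 h3) (ho' i j l h1 h2 h3)⟩
  smul_mem' := by
    rintro c a ⟨hs, hd, ho⟩
    exact ⟨fun p q => by simp [Matrix.smul_apply, hs p q],
      fun i => Submodule.smul_mem _ _ (hd i),
      fun i j l h1 h2 h3 => Submodule.smul_mem _ _ (ho i j l h1 h2 h3)⟩

/-- The rigid body motion `x ↦ a + b × x` as a polynomial vector field. -/
def rigid (a b : Fin 3 → ℝ) : Fin 3 → Poly3 :=
  ![C (a 0) + (C (b 1) * X 2 - C (b 2) * X 1),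
    C (a 1) + (C (b 2) * X 0 - C (b 0) * X 2),
    C (a 2) + (C (b 0) * X 1 - C (b 1) * X 0)]

/-- The space `T` of rigid body motions. -/
def RigidSub : Submodule ℝ (Fin 3 → Poly3) where
  carrier := {v | ∃ a b : Fin 3 → ℝ, v = rigid a b}
  zero_mem' := ⟨0, 0, by funext i; fin_cases i <;> simp [rigid]⟩
  add_mem' := by
    rintro u v ⟨a, b, rfl⟩ ⟨a', b', rfl⟩
    refine ⟨a + a', b + b', ?_⟩
    funext i; fin_cases i <;>
      · simp [rigid, Pi.add_apply, map_add]
        ring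
  smul_mem' := by
    rintro c v ⟨a, b, rfl⟩
    refine ⟨c • a, c • b, ?_⟩
    funext i; fin_cases i <;>
      · simp [rigid, Pi.smul_apply, smul_eq_C_mul, map_mul, smul_eq_mul]
        ring

/-- The symmetrized gradient `ε(v)_{ij} = ∂v_i/∂x_j + ∂v_j/∂x_i`. -/
def eps (v : Fin 3 → Poly3) : Fin 3 → Fin 3 → Poly3 :=
  fun i j => MvPolynomial.pderiv j (v i) + MvPolynomial.pderiv i (v j)

/-- The index remaining from `{i, j}` in `{0, 1, 2}`. -/
def other (i j : Fin 3) : Fin 3 := ⟨(3 - i.val - j.val) % 3, by omega⟩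

/-- The space `{ τ ∈ S₂ : div τ ∈ T }` where `T` is the space of rigid body motions. -/
def SigmaT : Submodule ℝ Mat3 where
  carrier := {τ | isS2 τ ∧ divRow τ ∈ RigidSub}
  zero_mem' := by
    refine ⟨S2sub.zero_mem, ?_⟩
    have h : divRow (0 : Mat3) = 0 := by
      funext p
      simp only [divRow, Matrix.zero_apply, map_zero, Finset.sum_const_zero]
      rfl
    rw [h]; exact RigidSub.zero_mem
  add_mem' := by
    rintro a b ⟨ha, ha'⟩ ⟨hb, hb'⟩
    refine ⟨S2sub.add_mem ha hb, ?_⟩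
    have h : divRow (a + b) = divRow a + divRow b := funext fun p => divRow_add a b p
    rw [h]; exact RigidSub.add_mem ha' hb'
  smul_mem' := by
    rintro c a ⟨ha, ha'⟩
    refine ⟨S2sub.smul_mem c ha, ?_⟩
    have h : divRow (c • a) = c • divRow a := funext fun p => divRow_smul c a p
    rw [h]; exact RigidSub.smul_mem c ha'

/-! ### Auxiliary lemmas for the Piola transform -/

lemma mem_Pdeg_iff' (p : Poly3) (k : Fin 3 → ℕ) :
    p ∈ Pdeg k ↔ ∀ i, p.degreeOf i ≤ k i := Iff.rfl

lemma degreeOf_aeval_le' (g : Fin 3 → Poly3)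
    (hg : ∀ i j : Fin 3, (g j).degreeOf i ≤ if j = i then 1 else 0)
    (p : Poly3) (i : Fin 3) : (aeval g p).degreeOf i ≤ p.degreeOf i := by
  conv_lhs => rw [p.as_sum]
  rw [map_sum]
  refine (degreeOf_sum_le i _ _).trans ?_
  rw [Finset.sup_le_iff]
  intro s hs
  have h1 : (aeval g) (monomial s (coeff s p)) = C (coeff s p) * ∏ j : Fin 3, g j ^ s j := by
    rw [aeval_monomial, algebraMap_eq, Finsupp.prod_fintype]
    intro j; exact pow_zero _
  rw [h1]
  have hsup : s i ≤ p.degreeOf i := by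
    rw [degreeOf_eq_sup]; exact Finset.le_sup (f := fun m => m i) hs
  refine ((degreeOf_C_mul_le _ _ _).trans ((degreeOf_prod_le _ _ _).trans ?_)).trans hsup
  calc ∑ j : Fin 3, (g j ^ s j).degreeOf i
      ≤ ∑ j : Fin 3, s j * (if j = i then 1 else 0) := by
        refine Finset.sum_le_sum fun j _ => (degreeOf_pow_le _ _ _).trans ?_
        exact Nat.mul_le_mul_left _ (hg i j)
    _ = s i := by simp [mul_ite, mul_one, mul_zero, Finset.sum_ite_eq']

section PiolaAux
variable (h b : Fin 3 → ℝ)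

/-- The substitution `x_i ↦ (x_i - b_i)/h_i`. -/
def fwd : Fin 3 → Poly3 := fun i => C (h i)⁻¹ * (X i - C (b i))

/-- The substitution `x_i ↦ h_i x_i + b_i`. -/
def bwd : Fin 3 → Poly3 := fun i => C (h i) * X i + C (b i)

lemma deg_fwd (i j : Fin 3) : (fwd h b j).degreeOf i ≤ if j = i then 1 else 0 := by
  refine (degreeOf_C_mul_le _ _ _).trans ((degreeOf_sub_le _ _ _).trans ?_)
  rw [degreeOf_X, degreeOf_C]
  rcases eq_or_ne j i with rfl | hne
  · simp
  · simp [Ne.symm hne, hne]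

lemma deg_bwd (i j : Fin 3) : (bwd h b j).degreeOf i ≤ if j = i then 1 else 0 := by
  refine (degreeOf_add_le _ _ _).trans ?_
  rw [degreeOf_C]
  refine max_le ((degreeOf_C_mul_le _ _ _).trans ?_) (by positivity)
  rw [degreeOf_X]
  rcases eq_or_ne j i with rfl | hne
  · simp
  · simp [Ne.symm hne, hne]

lemma bwd_fwd (hh : ∀ i, h i ≠ 0) (p : Poly3) :
    aeval (bwd h b) (aeval (fwd h b) p) = p := by
  have h0 : aeval (bwd h b) (aeval (fwd h b) p)
      = aeval (fun i => aeval (bwd h b) (fwd h b i)) p := by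
    simp only [aeval_eq_bind₁, bind₁_bind₁]
  rw [h0]
  have he : (fun i => aeval (bwd h b) (fwd h b i)) = X := by
    funext i
    simp only [fwd, bwd, map_mul, map_sub, aeval_C, aeval_X, algebraMap_eq]
    rw [add_sub_cancel_right, ← mul_assoc, ← C_mul, inv_mul_cancel₀ (hh i), C_1, one_mul]
  rw [he, aeval_X_left_apply]

lemma pderiv_fwd (q : Fin 3) (p : Poly3) :
    pderiv q (aeval (fwd h b) p) = C (h q)⁻¹ * aeval (fwd h b) (pderiv q p) := by
  induction p using MvPolynomial.induction_on with
  | C a => simp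
  | add f g hf hg =>
    simp only [map_add, ← aeval_eq_bind₁, hf, hg]; ring
  | mul_X f j hf =>
    simp only [map_mul, aeval_X, ← aeval_eq_bind₁, pderiv_mul, hf, map_add, pderiv_X]
    rcases eq_or_ne q j with rfl | hne
    · simp only [fwd, pderiv_mul, pderiv_C, map_sub, pderiv_X, Pi.single_eq_same,
        zero_mul, zero_add, map_zero, mul_zero, mul_one, zero_sub, map_one, sub_zero]
      ring
    · have h1 : pderiv q (fwd h b j) = 0 := by
        simp [fwd, pderiv_X, Ne.symm hne]
      have h2 : (Pi.single j 1 : Fin 3 → MvPolynomial (Fin 3) ℝ) q = 0 := by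
        simp [Pi.single_eq_of_ne hne]
      have h3 : (Pi.single q 1 : Fin 3 → MvPolynomial (Fin 3) ℝ) j = 0 :=
        Pi.single_eq_of_ne (Ne.symm hne) 1
      simp only [h1, mul_zero, add_zero, pderiv_X, h2, h3, map_zero, mul_zero, map_add, map_mul]
      ring

lemma eval_aeval_fwd (x : Fin 3 → ℝ) (f : Poly3) :
    eval x (aeval (fwd h b) f) = eval (fun i => (x i - b i) / h i) f := by
  rw [aeval_def, algebraMap_eq, eval_eval₂]
  have h0 : ((eval x).comp (C : ℝ →+* Poly3)) = RingHom.id ℝ := by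
    ext r; simp
  rw [h0, eval₂_id]
  have h1 : (fun s => eval x (fwd h b s)) = fun i => (x i - b i) / h i := by
    funext i
    simp only [fwd, map_mul, map_sub, eval_C, eval_X]
    rw [div_eq_inv_mul]
  rw [h1]

lemma mem_Pdeg_scale_iff (hh : ∀ i, h i ≠ 0) (c : ℝ) (hc : c ≠ 0) (f : Poly3)
    (k : Fin 3 → ℕ) : C c * aeval (fwd h b) f ∈ Pdeg k ↔ f ∈ Pdeg k := by
  rw [mem_Pdeg_iff', mem_Pdeg_iff']
  constructor
  · intro hf i
    have hpsi : aeval (bwd h b) (C c * aeval (fwd h b) f) = C c * f := by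
      rw [map_mul, aeval_C, algebraMap_eq, bwd_fwd h b hh]
    have hrec : f = C c⁻¹ * aeval (bwd h b) (C c * aeval (fwd h b) f) := by
      rw [hpsi, ← mul_assoc, ← C_mul, inv_mul_cancel₀ hc, C_1, one_mul]
    calc f.degreeOf i
        = (C c⁻¹ * aeval (bwd h b) (C c * aeval (fwd h b) f)).degreeOf i := by rw [← hrec]
      _ ≤ (aeval (bwd h b) (C c * aeval (fwd h b) f)).degreeOf i := degreeOf_C_mul_le _ _ _
      _ ≤ (C c * aeval (fwd h b) f).degreeOf i :=
          degreeOf_aeval_le' _ (deg_bwd h b) _ i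
      _ ≤ k i := hf i
  · intro hf i
    exact (degreeOf_C_mul_le _ _ _).trans
      ((degreeOf_aeval_le' _ (deg_fwd h b) f i).trans (hf i))

end PiolaAux

/-- Invariance of `Σ` under the matrix Piola transform: if `B = diag(h₁,h₂,h₃)` with
`h_i > 0`, `F(y) = By + b`, and `τ(x) = B τ̂(F⁻¹ x) Bᵀ` (as an identity between the
evaluations of the polynomial matrix fields), then `τ` is symmetric and `τ ∈ Σ ↔ τ̂ ∈ Σ`. -/
theorem piola_invariance (h b : Fin 3 → ℝ) (hh : ∀ i, 0 < h i)
    (τhat τ : Mat3) (hsym : ∀ p q, τhat p q = τhat q p)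
    (hrel : ∀ x : Fin 3 → ℝ,
      (Matrix.of fun p q => MvPolynomial.eval x (τ p q)) =
        Matrix.diagonal h *
          (Matrix.of fun p q => MvPolynomial.eval (fun i => (x i - b i) / h i) (τhat p q)) *
          (Matrix.diagonal h).transpose) :
    (∀ p q, τ p q = τ q p) ∧ (τ ∈ SigmaSub ↔ τhat ∈ SigmaSub) := by
  have hne : ∀ i, h i ≠ 0 := fun i => (hh i).ne'
  -- the polynomial identity behind the Piola transform
  have key : ∀ p q, τ p q = C (h p * h q) * aeval (fwd h b) (τhat p q) := by
    intro p q
    apply MvPolynomial.funext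
    intro x
    have hx := hrel x
    rw [← Matrix.ext_iff] at hx
    have hpq := hx p q
    rw [Matrix.diagonal_transpose, Matrix.mul_diagonal, Matrix.diagonal_mul] at hpq
    simp only [Matrix.of_apply] at hpq
    rw [hpq, map_mul, eval_C, eval_aeval_fwd]
    ring
  have hsymτ : ∀ p q, τ p q = τ q p := by
    intro p q
    rw [key p q, key q p, hsym p q, mul_comm (h p) (h q)]
  -- divergence transforms with a single factor of h
  have hdiv : ∀ p, divRow τ p = C (h p) * aeval (fwd h b) (divRow τhat p) := by
    intro p
    unfold divRow
    rw [map_sum, Finset.mul_sum]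
    refine Finset.sum_congr rfl fun q _ => ?_
    rw [key p q, pderiv_C_mul, pderiv_fwd, ← mul_assoc, ← C_mul, mul_assoc (h p),
      mul_inv_cancel₀ (hne q), mul_one]
  have hmem : ∀ p q (k : Fin 3 → ℕ), (τ p q ∈ Pdeg k ↔ τhat p q ∈ Pdeg k) := by
    intro p q k
    rw [key p q]
    exact mem_Pdeg_scale_iff h b hne _ (mul_ne_zero (hne p) (hne q)) _ k
  have hdmem : ∀ p (k : Fin 3 → ℕ), (divRow τ p ∈ Pdeg k ↔ divRow τhat p ∈ Pdeg k) := by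
    intro p k
    rw [hdiv p]
    exact mem_Pdeg_scale_iff h b hne _ (hne p) _ k
  refine ⟨hsymτ, ?_⟩
  constructor
  · rintro ⟨⟨-, h1, h2, h3, h4, h5, h6⟩, d0, d1, d2⟩
    exact ⟨⟨hsym, (hmem 0 0 _).mp h1, (hmem 1 1 _).mp h2, (hmem 2 2 _).mp h3,
      (hmem 0 1 _).mp h4, (hmem 0 2 _).mp h5, (hmem 1 2 _).mp h6⟩,
      (hdmem 0 _).mp d0, (hdmem 1 _).mp d1, (hdmem 2 _).mp d2⟩
  · rintro ⟨⟨-, h1, h2, h3, h4, h5, h6⟩, d0, d1, d2⟩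
    exact ⟨⟨hsymτ, (hmem 0 0 _).mpr h1, (hmem 1 1 _).mpr h2, (hmem 2 2 _).mpr h3,
      (hmem 0 1 _).mpr h4, (hmem 0 2 _).mpr h5, (hmem 1 2 _).mpr h6⟩,
      (hdmem 0 _).mpr d0, (hdmem 1 _).mpr d1, (hdmem 2 _).mpr d2⟩


end
end

section
/- The real vector space {tau in S_2 : div tau in T}, where T is the space of rigid body motions, has dimension 72. -/
open MvPolynomial

noncomputable section

set_option maxRecDepth 10000
set_option maxHeartbeats 8000000

def mex (a b c : ℕ) : Fin 3 →₀ ℕ := Finsupp.equivFunOnFinite.symm ![a, b, c]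

@[simp] lemma mex_apply0 (a b c : ℕ) : mex a b c 0 = a := rfl
@[simp] lemma mex_apply1 (a b c : ℕ) : mex a b c 1 = b := rfl
@[simp] lemma mex_apply2 (a b c : ℕ) : mex a b c 2 = c := rfl

lemma eq_mex (m : Fin 3 →₀ ℕ) : m = mex (m 0) (m 1) (m 2) := by
  ext i; fin_cases i <;> rfl

@[simp] lemma mex_eq_mex {a b c a' b' c' : ℕ} :
    mex a b c = mex a' b' c' ↔ a = a' ∧ b = b' ∧ c = c' := by
  constructor
  · intro h
    exact ⟨by rw [← mex_apply0 a b c, h]; rfl, by rw [← mex_apply1 a b c, h]; rfl,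
      by rw [← mex_apply2 a b c, h]; rfl⟩
  · rintro ⟨rfl, rfl, rfl⟩; rfl

def mon (a b c : ℕ) (r : ℝ) : Poly3 := monomial (mex a b c) r

@[simp] lemma mon_zero (a b c : ℕ) : mon a b c 0 = 0 := by simp [mon]

@[simp] lemma coeff_mon (a b c a' b' c' : ℕ) (r : ℝ) :
    coeff (mex a' b' c') (mon a b c r) = if a = a' ∧ b = b' ∧ c = c' then r else 0 := by
  rw [mon, coeff_monomial]
  simp [mex_eq_mex]

lemma mex_sub_single0 (a b c : ℕ) : mex a b c - Finsupp.single 0 1 = mex (a-1) b c := by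
  ext i; fin_cases i <;> simp [Finsupp.single_apply, Finsupp.tsub_apply]
lemma mex_sub_single1 (a b c : ℕ) : mex a b c - Finsupp.single 1 1 = mex a (b-1) c := by
  ext i; fin_cases i <;> simp [Finsupp.single_apply, Finsupp.tsub_apply]
lemma mex_sub_single2 (a b c : ℕ) : mex a b c - Finsupp.single 2 1 = mex a b (c-1) := by
  ext i; fin_cases i <;> simp [Finsupp.single_apply, Finsupp.tsub_apply]

lemma mex_add_single0 (a b c : ℕ) : mex a b c + Finsupp.single 0 1 = mex (a+1) b c := by
  ext i; fin_cases i <;> simp [Finsupp.single_apply]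
lemma mex_add_single1 (a b c : ℕ) : mex a b c + Finsupp.single 1 1 = mex a (b+1) c := by
  ext i; fin_cases i <;> simp [Finsupp.single_apply]
lemma mex_add_single2 (a b c : ℕ) : mex a b c + Finsupp.single 2 1 = mex a b (c+1) := by
  ext i; fin_cases i <;> simp [Finsupp.single_apply]

@[simp] lemma pderiv_mon0 (a b c : ℕ) (r : ℝ) :
    pderiv 0 (mon a b c r) = mon (a-1) b c (r * a) := by
  rw [mon, pderiv_monomial, mex_sub_single0]; rfl
@[simp] lemma pderiv_mon1 (a b c : ℕ) (r : ℝ) :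
    pderiv 1 (mon a b c r) = mon a (b-1) c (r * b) := by
  rw [mon, pderiv_monomial, mex_sub_single1]; rfl
@[simp] lemma pderiv_mon2 (a b c : ℕ) (r : ℝ) :
    pderiv 2 (mon a b c r) = mon a b (c-1) (r * c) := by
  rw [mon, pderiv_monomial, mex_sub_single2]; rfl

lemma mon_eq_CX (a b c : ℕ) (r : ℝ) :
    mon a b c r = C r * X 0 ^ a * X 1 ^ b * X 2 ^ c := by
  rw [mon]
  have h : mex a b c = Finsupp.single 0 a + Finsupp.single 1 b + Finsupp.single 2 c := by
    ext i; fin_cases i <;> simp [Finsupp.single_apply]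
  rw [h, X_pow_eq_monomial, X_pow_eq_monomial, X_pow_eq_monomial, C_apply,
    monomial_mul, monomial_mul, monomial_mul, mul_one, zero_add]
  norm_num

@[simp] lemma eval_mon (x : Fin 3 → ℝ) (a b c : ℕ) (r : ℝ) :
    eval x (mon a b c r) = r * x 0 ^ a * x 1 ^ b * x 2 ^ c := by
  simp [mon_eq_CX]

lemma coeff_pderiv (i : Fin 3) (m : Fin 3 →₀ ℕ) (p : Poly3) :
    coeff m (pderiv i p) = (m i + 1 : ℝ) * coeff (m + Finsupp.single i 1) p := by
  induction p using MvPolynomial.induction_on' with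
  | monomial s r =>
    rw [pderiv_monomial, coeff_monomial, coeff_monomial]
    by_cases h : s = m + Finsupp.single i 1
    · subst h
      have h1 : m + Finsupp.single i 1 - Finsupp.single i 1 = m := by
        ext j; simp [Finsupp.single_apply]
      rw [if_pos h1, if_pos rfl]
      have h3 : ((m + Finsupp.single i 1 : Fin 3 →₀ ℕ) i : ℝ) = (m i : ℝ) + 1 := by
        push_cast [Finsupp.add_apply, Finsupp.single_apply]
        simp
      rw [h3]; ring
    · rw [if_neg h, mul_zero]
      by_cases h2 : s - Finsupp.single i 1 = m
      · rw [if_pos h2]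
        have hsi : s i = 0 := by
          by_contra hs
          apply h
          ext j
          by_cases hj : j = i
          · subst hj
            have h4 := DFunLike.congr_fun h2 j
            simp [Finsupp.tsub_apply] at h4
            simp [Finsupp.single_apply, ← h4]
            omega
          · have h4 := DFunLike.congr_fun h2 j
            simp [Finsupp.tsub_apply, Finsupp.single_apply, hj,
              (show ¬ i = j from fun h' => hj h'.symm)] at h4 ⊢
            omega
        simp [hsi]
      · rw [if_neg h2]
  | add p q hp hq => simp [map_add, coeff_add, hp, hq]; ring

lemma coeff_pderiv0_mex (a b c : ℕ) (p : Poly3) :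
    coeff (mex a b c) (pderiv 0 p) = ((a : ℝ) + 1) * coeff (mex (a+1) b c) p := by
  rw [coeff_pderiv, mex_add_single0, mex_apply0]
lemma coeff_pderiv1_mex (a b c : ℕ) (p : Poly3) :
    coeff (mex a b c) (pderiv 1 p) = ((b : ℝ) + 1) * coeff (mex a (b+1) c) p := by
  rw [coeff_pderiv, mex_add_single1, mex_apply1]
lemma coeff_pderiv2_mex (a b c : ℕ) (p : Poly3) :
    coeff (mex a b c) (pderiv 2 p) = ((c : ℝ) + 1) * coeff (mex a b (c+1)) p := by
  rw [coeff_pderiv, mex_add_single2, mex_apply2]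

lemma mon_mem {k : Fin 3 → ℕ} {a b c : ℕ} (r : ℝ) (ha : a ≤ k 0) (hb : b ≤ k 1)
    (hc : c ≤ k 2) : mon a b c r ∈ Pdeg k := by
  intro i
  rw [degreeOf_le_iff]
  intro m hm
  rw [mon] at hm
  have h := support_monomial_subset hm
  simp only [Finset.mem_singleton] at h
  subst h
  fin_cases i <;> simpa using by assumption

lemma poly_eq_zero (p : Poly3) (k0 k1 k2 : ℕ) (hp : p ∈ Pdeg ![k0, k1, k2])
    (h : ∀ a b c : ℕ, a ≤ k0 → b ≤ k1 → c ≤ k2 → coeff (mex a b c) p = 0) : p = 0 := by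
  have hp' : ∀ i, p.degreeOf i ≤ ![k0, k1, k2] i := hp
  ext m
  rw [coeff_zero]
  by_contra hne
  have hm : m ∈ p.support := mem_support_iff.mpr hne
  have hb0 : m 0 ≤ k0 := le_trans (monomial_le_degreeOf 0 hm) (by simpa using hp' 0)
  have hb1 : m 1 ≤ k1 := le_trans (monomial_le_degreeOf 1 hm) (by simpa using hp' 1)
  have hb2 : m 2 ≤ k2 := le_trans (monomial_le_degreeOf 2 hm) (by simpa using hp' 2)
  have hz := h (m 0) (m 1) (m 2) hb0 hb1 hb2
  rw [← eq_mex m] at hz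
  exact hne hz

lemma rigid_eq0 (v w : Fin 3 → ℝ) :
    rigid v w 0 = mon 0 0 0 (v 0) + mon 0 1 0 (-(w 2)) + mon 0 0 1 (w 1) := by
  apply MvPolynomial.funext; intro x
  simp [rigid]
  ring
lemma rigid_eq1 (v w : Fin 3 → ℝ) :
    rigid v w 1 = mon 0 0 0 (v 1) + mon 1 0 0 (w 2) + mon 0 0 1 (-(w 0)) := by
  apply MvPolynomial.funext; intro x
  simp [rigid]
  ring
lemma rigid_eq2 (v w : Fin 3 → ℝ) :
    rigid v w 2 = mon 0 0 0 (v 2) + mon 0 1 0 (w 0) + mon 1 0 0 (-(w 1)) := by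
  apply MvPolynomial.funext; intro x
  simp [rigid]
  ring

def t11 (c : Fin 72 → ℝ) : Poly3 :=
  mon 0 0 0 (c 0) + mon 0 0 1 (c 3) + mon 0 1 0 (c 2) + mon 0 1 1 (c 5) + mon 1 0 0 (c 1) + mon 1 0 1 ((-1/1 : ℝ) * c 17 + (-1/1 : ℝ) * c 21 + (-2/1 : ℝ) * c 38 + (-2/1 : ℝ) * c 48 + (-1/1 : ℝ) * c 66) + mon 1 1 0 (c 4) + mon 1 1 1 ((-2/1 : ℝ) * c 23 + (-2/1 : ℝ) * c 41) + mon 2 0 0 ((-1/2 : ℝ) * c 26 + (-1/2 : ℝ) * c 43) + mon 2 0 1 ((-1/2 : ℝ) * c 27 + (-1/1 : ℝ) * c 44) + mon 2 1 0 ((-1/1 : ℝ) * c 28 + (-1/2 : ℝ) * c 46) + mon 2 1 1 ((-1/1 : ℝ) * c 29 + (-1/1 : ℝ) * c 47) + mon 3 0 0 ((-1/3 : ℝ) * c 32 + (-1/3 : ℝ) * c 49) + mon 3 0 1 ((-1/3 : ℝ) * c 33 + (-2/3 : ℝ) * c 50) + mon 3 1 0 ((-2/3 : ℝ) * c 34 +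 (-1/3 : ℝ) * c 52) + mon 3 1 1 ((-2/3 : ℝ) * c 35 + (-2/3 : ℝ) * c 53)

def t22 (c : Fin 72 → ℝ) : Poly3 :=
  mon 0 0 0 (c 6) + mon 0 0 1 (c 9) + mon 0 1 0 (c 8) + mon 0 1 1 (c 11) + mon 0 2 0 ((-1/2 : ℝ) * c 26 + (-1/2 : ℝ) * c 58) + mon 0 2 1 ((-1/2 : ℝ) * c 27 + (-1/1 : ℝ) * c 59) + mon 0 3 0 ((-1/3 : ℝ) * c 28 + (-1/3 : ℝ) * c 61) + mon 0 3 1 ((-1/3 : ℝ) * c 29 + (-2/3 : ℝ) * c 62) + mon 1 0 0 (c 7) + mon 1 0 1 (c 10) + mon 1 1 0 ((-1/1 : ℝ) * c 4 + (-2/1 : ℝ) * c 22 + (-2/1 : ℝ) * c 30 + (-1/1 : ℝ) * c 40 + (-1/1 : ℝ) * c 64) + mon 1 1 1 ((-2/1 : ℝ) * c 31 + (-2/1 : ℝ) * c 65) + mon 1 2 0 ((-1/1 : ℝ) * c 32 + (-1/2 : ℝ) * c 67) + mon 1 2 1 ((-1/1 : ℝ) * c 33 + (-1/1 : ℝ)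 * c 68) + mon 1 3 0 ((-2/3 : ℝ) * c 34 + (-1/3 : ℝ) * c 70) + mon 1 3 1 ((-2/3 : ℝ) * c 35 + (-2/3 : ℝ) * c 71)

def t33 (c : Fin 72 → ℝ) : Poly3 :=
  mon 0 0 0 (c 12) + mon 0 0 1 (c 15) + mon 0 0 2 ((-1/2 : ℝ) * c 43 + (-1/2 : ℝ) * c 58) + mon 0 0 3 ((-1/3 : ℝ) * c 44 + (-1/3 : ℝ) * c 59) + mon 0 1 0 (c 14) + mon 0 1 1 ((-1/1 : ℝ) * c 11 + (-1/1 : ℝ) * c 25 + (-1/1 : ℝ) * c 45 + (-2/1 : ℝ) * c 56 + (-2/1 : ℝ) * c 60) + mon 0 1 2 ((-1/2 : ℝ) * c 46 + (-1/1 : ℝ) * c 61) + mon 0 1 3 ((-1/3 : ℝ) * c 47 + (-2/3 : ℝ) * c 62) + mon 1 0 0 (c 13) + mon 1 0 1 (c 17) + mon 1 0 2 ((-1/1 : ℝ) * c 49 + (-1/2 : ℝ) * c 67) + mon 1 0 3 ((-2/3 : ℝ) * c 50 + (-1/3 : ℝ) * c 68) + mon 1 1 0 (c 16) + mon 1 1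 1 ((-2/1 : ℝ) * c 51 + (-2/1 : ℝ) * c 69) + mon 1 1 2 ((-1/1 : ℝ) * c 52 + (-1/1 : ℝ) * c 70) + mon 1 1 3 ((-2/3 : ℝ) * c 53 + (-2/3 : ℝ) * c 71)

def t12 (c : Fin 72 → ℝ) : Poly3 :=
  mon 0 0 0 (c 18) + mon 0 0 1 (c 19) + mon 0 1 0 (c 20) + mon 0 1 1 (c 21) + mon 0 2 0 (c 22) + mon 0 2 1 (c 23) + mon 1 0 0 (c 24) + mon 1 0 1 (c 25) + mon 1 1 0 (c 26) + mon 1 1 1 (c 27) + mon 1 2 0 (c 28) + mon 1 2 1 (c 29) + mon 2 0 0 (c 30) + mon 2 0 1 (c 31) + mon 2 1 0 (c 32) + mon 2 1 1 (c 33) + mon 2 2 0 (c 34) + mon 2 2 1 (c 35)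

def t13 (c : Fin 72 → ℝ) : Poly3 :=
  mon 0 0 0 (c 36) + mon 0 0 1 (c 37) + mon 0 0 2 (c 38) + mon 0 1 0 (c 39) + mon 0 1 1 (c 40) + mon 0 1 2 (c 41) + mon 1 0 0 (c 42) + mon 1 0 1 (c 43) + mon 1 0 2 (c 44) + mon 1 1 0 (c 45) + mon 1 1 1 (c 46) + mon 1 1 2 (c 47) + mon 2 0 0 (c 48) + mon 2 0 1 (c 49) + mon 2 0 2 (c 50) + mon 2 1 0 (c 51) + mon 2 1 1 (c 52) + mon 2 1 2 (c 53)

def t23 (c : Fin 72 → ℝ) : Poly3 :=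
  mon 0 0 0 (c 54) + mon 0 0 1 (c 55) + mon 0 0 2 (c 56) + mon 0 1 0 (c 57) + mon 0 1 1 (c 58) + mon 0 1 2 (c 59) + mon 0 2 0 (c 60) + mon 0 2 1 (c 61) + mon 0 2 2 (c 62) + mon 1 0 0 (c 63) + mon 1 0 1 (c 64) + mon 1 0 2 (c 65) + mon 1 1 0 (c 66) + mon 1 1 1 (c 67) + mon 1 1 2 (c 68) + mon 1 2 0 (c 69) + mon 1 2 1 (c 70) + mon 1 2 2 (c 71)

def phi (c : Fin 72 → ℝ) : Mat3 :=
  Matrix.of ![![t11 c, t12 c, t13 c], ![t12 c, t22 c, t23 c], ![t13 c, t23 c, t33 c]]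

@[simp] lemma phi00 (c : Fin 72 → ℝ) : phi c 0 0 = t11 c := rfl
@[simp] lemma phi01 (c : Fin 72 → ℝ) : phi c 0 1 = t12 c := rfl
@[simp] lemma phi02 (c : Fin 72 → ℝ) : phi c 0 2 = t13 c := rfl
@[simp] lemma phi10 (c : Fin 72 → ℝ) : phi c 1 0 = t12 c := rfl
@[simp] lemma phi11 (c : Fin 72 → ℝ) : phi c 1 1 = t22 c := rfl
@[simp] lemma phi12 (c : Fin 72 → ℝ) : phi c 1 2 = t23 c := rfl
@[simp] lemma phi20 (c : Fin 72 → ℝ) : phi c 2 0 = t13 c := rfl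
@[simp] lemma phi21 (c : Fin 72 → ℝ) : phi c 2 1 = t23 c := rfl
@[simp] lemma phi22 (c : Fin 72 → ℝ) : phi c 2 2 = t33 c := rfl

def vv (c : Fin 72 → ℝ) : Fin 3 → ℝ := ![(c 1 + c 20 + c 37), (c 8 + c 24 + c 55), (c 15 + c 42 + c 57)]
def ww (c : Fin 72 → ℝ) : Fin 3 → ℝ := ![((-1/1 : ℝ) * c 11 + (-1/1 : ℝ) * c 25 + (-2/1 : ℝ) * c 56), ((-1/1 : ℝ) * c 17 + (-2/1 : ℝ) * c 48 + (-1/1 : ℝ) * c 66), ((-1/1 : ℝ) * c 4 + (-2/1 : ℝ) * c 22 + (-1/1 : ℝ) * c 40)]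

def Rp : Fin 72 → Fin 3 := ![0, 0, 0, 0, 0, 0, 1, 1, 1, 1, 1, 1, 2, 2, 2, 2, 2, 2, 0, 0, 0, 0, 0, 0, 0, 0, 0, 0, 0, 0, 0, 0, 0, 0, 0, 0, 0, 0, 0, 0, 0, 0, 0, 0, 0, 0, 0, 0, 0, 0, 0, 0, 0, 0, 1, 1, 1, 1, 1, 1, 1, 1, 1, 1, 1, 1, 1, 1, 1, 1, 1, 1]
def Rq : Fin 72 → Fin 3 := ![0, 0, 0, 0, 0, 0, 1, 1, 1, 1, 1, 1, 2, 2, 2, 2, 2, 2, 1, 1, 1, 1, 1, 1, 1, 1, 1, 1, 1, 1, 1, 1, 1, 1, 1, 1, 2, 2, 2, 2, 2, 2, 2, 2, 2, 2, 2, 2, 2, 2, 2, 2, 2, 2, 2, 2, 2, 2, 2, 2, 2, 2, 2, 2, 2, 2, 2, 2, 2, 2, 2, 2]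
def Rmex : Fin 72 → (Fin 3 →₀ ℕ) := ![mex 0 0 0, mex 1 0 0, mex 0 1 0, mex 0 0 1, mex 1 1 0, mex 0 1 1, mex 0 0 0, mex 1 0 0, mex 0 1 0, mex 0 0 1, mex 1 0 1, mex 0 1 1, mex 0 0 0, mex 1 0 0, mex 0 1 0, mex 0 0 1, mex 1 1 0, mex 1 0 1, mex 0 0 0, mex 0 0 1, mex 0 1 0, mex 0 1 1, mex 0 2 0, mex 0 2 1, mex 1 0 0, mex 1 0 1, mex 1 1 0, mex 1 1 1, mex 1 2 0, mex 1 2 1, mex 2 0 0, mex 2 0 1, mex 2 1 0, mex 2 1 1, mex 2 2 0, mex 2 2 1, mex 0 0 0, mex 0 0 1, mex 0 0 2, mex 0 1 0, mex 0 1 1, mex 0 1 2, mex 1 0 0, mex 1 0 1, mex 1 0 2, mex 1 1 0, mex 1 1 1, mex 1 1 2, mex 2 0 0, mex 2 0 1, mex 2 0 2, mex 2 1 0, mex 2 1 1, mex 2 1 2, mex 0 0 0, mex 0 0 1, mex 0 0 2, mex 0 1 0, mex 0 1 1, mex 0 1 2, mex 0 2 0, mex 0 2 1, mex 0 2 2,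 mex 1 0 0, mex 1 0 1, mex 1 0 2, mex 1 1 0, mex 1 1 1, mex 1 1 2, mex 1 2 0, mex 1 2 1, mex 1 2 2]

def Rmap : Mat3 →ₗ[ℝ] (Fin 72 → ℝ) where
  toFun τ := fun k => MvPolynomial.coeff (Rmex k) (τ (Rp k) (Rq k))
  map_add' τ σ := by funext k; simp [Matrix.add_apply]
  map_smul' r τ := by funext k; simp [Matrix.smul_apply]

lemma phi_mem (c : Fin 72 → ℝ) : phi c ∈ SigmaT := by
  refine ⟨⟨fun p q => by fin_cases p <;> fin_cases q <;> rfl, ?_, ?_, ?_, ?_, ?_, ?_⟩, vv c, ww c, ?_⟩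
  · show t11 c ∈ Pdeg ![3,1,1]
    unfold t11
    repeat' apply Submodule.add_mem
    all_goals apply mon_mem <;> decide
  · show t22 c ∈ Pdeg ![1,3,1]
    unfold t22
    repeat' apply Submodule.add_mem
    all_goals apply mon_mem <;> decide
  · show t33 c ∈ Pdeg ![1,1,3]
    unfold t33
    repeat' apply Submodule.add_mem
    all_goals apply mon_mem <;> decide
  · show t12 c ∈ Pdeg ![2,2,1]
    unfold t12
    repeat' apply Submodule.add_mem
    all_goals apply mon_mem <;> decide
  · show t13 c ∈ Pdeg ![2,1,2]
    unfold t13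
    repeat' apply Submodule.add_mem
    all_goals apply mon_mem <;> decide
  · show t23 c ∈ Pdeg ![1,2,2]
    unfold t23
    repeat' apply Submodule.add_mem
    all_goals apply mon_mem <;> decide
  · funext p
    fin_cases p <;>
    · apply MvPolynomial.funext; intro x
      simp [divRow, Fin.sum_univ_three, t11, t12, t13, t22, t23, t33, map_add, rigid,
        vv, ww, mon_zero]
      ring

lemma Rmap_phi (c : Fin 72 → ℝ) : Rmap (phi c) = c := by
  funext k
  fin_cases k
  · show MvPolynomial.coeff (mex 0 0 0) (t11 c) = c 0
    simp [t11]
  · show MvPolynomial.coeff (mex 1 0 0) (t11 c) = c 1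
    simp [t11]
  · show MvPolynomial.coeff (mex 0 1 0) (t11 c) = c 2
    simp [t11]
  · show MvPolynomial.coeff (mex 0 0 1) (t11 c) = c 3
    simp [t11]
  · show MvPolynomial.coeff (mex 1 1 0) (t11 c) = c 4
    simp [t11]
  · show MvPolynomial.coeff (mex 0 1 1) (t11 c) = c 5
    simp [t11]
  · show MvPolynomial.coeff (mex 0 0 0) (t22 c) = c 6
    simp [t22]
  · show MvPolynomial.coeff (mex 1 0 0) (t22 c) = c 7
    simp [t22]
  · show MvPolynomial.coeff (mex 0 1 0) (t22 c) = c 8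
    simp [t22]
  · show MvPolynomial.coeff (mex 0 0 1) (t22 c) = c 9
    simp [t22]
  · show MvPolynomial.coeff (mex 1 0 1) (t22 c) = c 10
    simp [t22]
  · show MvPolynomial.coeff (mex 0 1 1) (t22 c) = c 11
    simp [t22]
  · show MvPolynomial.coeff (mex 0 0 0) (t33 c) = c 12
    simp [t33]
  · show MvPolynomial.coeff (mex 1 0 0) (t33 c) = c 13
    simp [t33]
  · show MvPolynomial.coeff (mex 0 1 0) (t33 c) = c 14
    simp [t33]
  · show MvPolynomial.coeff (mex 0 0 1) (t33 c) = c 15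
    simp [t33]
  · show MvPolynomial.coeff (mex 1 1 0) (t33 c) = c 16
    simp [t33]
  · show MvPolynomial.coeff (mex 1 0 1) (t33 c) = c 17
    simp [t33]
  · show MvPolynomial.coeff (mex 0 0 0) (t12 c) = c 18
    simp [t12]
  · show MvPolynomial.coeff (mex 0 0 1) (t12 c) = c 19
    simp [t12]
  · show MvPolynomial.coeff (mex 0 1 0) (t12 c) = c 20
    simp [t12]
  · show MvPolynomial.coeff (mex 0 1 1) (t12 c) = c 21
    simp [t12]
  · show MvPolynomial.coeff (mex 0 2 0) (t12 c) = c 22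
    simp [t12]
  · show MvPolynomial.coeff (mex 0 2 1) (t12 c) = c 23
    simp [t12]
  · show MvPolynomial.coeff (mex 1 0 0) (t12 c) = c 24
    simp [t12]
  · show MvPolynomial.coeff (mex 1 0 1) (t12 c) = c 25
    simp [t12]
  · show MvPolynomial.coeff (mex 1 1 0) (t12 c) = c 26
    simp [t12]
  · show MvPolynomial.coeff (mex 1 1 1) (t12 c) = c 27
    simp [t12]
  · show MvPolynomial.coeff (mex 1 2 0) (t12 c) = c 28
    simp [t12]
  · show MvPolynomial.coeff (mex 1 2 1) (t12 c) = c 29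
    simp [t12]
  · show MvPolynomial.coeff (mex 2 0 0) (t12 c) = c 30
    simp [t12]
  · show MvPolynomial.coeff (mex 2 0 1) (t12 c) = c 31
    simp [t12]
  · show MvPolynomial.coeff (mex 2 1 0) (t12 c) = c 32
    simp [t12]
  · show MvPolynomial.coeff (mex 2 1 1) (t12 c) = c 33
    simp [t12]
  · show MvPolynomial.coeff (mex 2 2 0) (t12 c) = c 34
    simp [t12]
  · show MvPolynomial.coeff (mex 2 2 1) (t12 c) = c 35
    simp [t12]
  · show MvPolynomial.coeff (mex 0 0 0) (t13 c) = c 36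
    simp [t13]
  · show MvPolynomial.coeff (mex 0 0 1) (t13 c) = c 37
    simp [t13]
  · show MvPolynomial.coeff (mex 0 0 2) (t13 c) = c 38
    simp [t13]
  · show MvPolynomial.coeff (mex 0 1 0) (t13 c) = c 39
    simp [t13]
  · show MvPolynomial.coeff (mex 0 1 1) (t13 c) = c 40
    simp [t13]
  · show MvPolynomial.coeff (mex 0 1 2) (t13 c) = c 41
    simp [t13]
  · show MvPolynomial.coeff (mex 1 0 0) (t13 c) = c 42
    simp [t13]
  · show MvPolynomial.coeff (mex 1 0 1) (t13 c) = c 43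
    simp [t13]
  · show MvPolynomial.coeff (mex 1 0 2) (t13 c) = c 44
    simp [t13]
  · show MvPolynomial.coeff (mex 1 1 0) (t13 c) = c 45
    simp [t13]
  · show MvPolynomial.coeff (mex 1 1 1) (t13 c) = c 46
    simp [t13]
  · show MvPolynomial.coeff (mex 1 1 2) (t13 c) = c 47
    simp [t13]
  · show MvPolynomial.coeff (mex 2 0 0) (t13 c) = c 48
    simp [t13]
  · show MvPolynomial.coeff (mex 2 0 1) (t13 c) = c 49
    simp [t13]
  · show MvPolynomial.coeff (mex 2 0 2) (t13 c) = c 50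
    simp [t13]
  · show MvPolynomial.coeff (mex 2 1 0) (t13 c) = c 51
    simp [t13]
  · show MvPolynomial.coeff (mex 2 1 1) (t13 c) = c 52
    simp [t13]
  · show MvPolynomial.coeff (mex 2 1 2) (t13 c) = c 53
    simp [t13]
  · show MvPolynomial.coeff (mex 0 0 0) (t23 c) = c 54
    simp [t23]
  · show MvPolynomial.coeff (mex 0 0 1) (t23 c) = c 55
    simp [t23]
  · show MvPolynomial.coeff (mex 0 0 2) (t23 c) = c 56
    simp [t23]
  · show MvPolynomial.coeff (mex 0 1 0) (t23 c) = c 57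
    simp [t23]
  · show MvPolynomial.coeff (mex 0 1 1) (t23 c) = c 58
    simp [t23]
  · show MvPolynomial.coeff (mex 0 1 2) (t23 c) = c 59
    simp [t23]
  · show MvPolynomial.coeff (mex 0 2 0) (t23 c) = c 60
    simp [t23]
  · show MvPolynomial.coeff (mex 0 2 1) (t23 c) = c 61
    simp [t23]
  · show MvPolynomial.coeff (mex 0 2 2) (t23 c) = c 62
    simp [t23]
  · show MvPolynomial.coeff (mex 1 0 0) (t23 c) = c 63
    simp [t23]
  · show MvPolynomial.coeff (mex 1 0 1) (t23 c) = c 64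
    simp [t23]
  · show MvPolynomial.coeff (mex 1 0 2) (t23 c) = c 65
    simp [t23]
  · show MvPolynomial.coeff (mex 1 1 0) (t23 c) = c 66
    simp [t23]
  · show MvPolynomial.coeff (mex 1 1 1) (t23 c) = c 67
    simp [t23]
  · show MvPolynomial.coeff (mex 1 1 2) (t23 c) = c 68
    simp [t23]
  · show MvPolynomial.coeff (mex 1 2 0) (t23 c) = c 69
    simp [t23]
  · show MvPolynomial.coeff (mex 1 2 1) (t23 c) = c 70
    simp [t23]
  · show MvPolynomial.coeff (mex 1 2 2) (t23 c) = c 71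
    simp [t23]

lemma sig_inj (τ : Mat3) (hτ : τ ∈ SigmaT) (h0 : Rmap τ = 0) : τ = 0 := by
  obtain ⟨⟨hsym, h1, h2, h3, h4, h5, h6⟩, v, w, hvw⟩ := hτ
  have hd0 : divRow τ 0 = pderiv 0 (τ 0 0) + pderiv 1 (τ 0 1) + pderiv 2 (τ 0 2) := by
    simp [divRow, Fin.sum_univ_three]
  have hd1 : divRow τ 1 = pderiv 0 (τ 0 1) + pderiv 1 (τ 1 1) + pderiv 2 (τ 1 2) := by
    simp [divRow, Fin.sum_univ_three, hsym 1 0]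
  have hd2 : divRow τ 2 = pderiv 0 (τ 0 2) + pderiv 1 (τ 1 2) + pderiv 2 (τ 2 2) := by
    simp [divRow, Fin.sum_univ_three, hsym 2 0, hsym 2 1]
  have F0 : MvPolynomial.coeff (mex 0 0 0) (τ 0 0) = 0 := congrFun h0 0
  have F1 : MvPolynomial.coeff (mex 1 0 0) (τ 0 0) = 0 := congrFun h0 1
  have F2 : MvPolynomial.coeff (mex 0 1 0) (τ 0 0) = 0 := congrFun h0 2
  have F3 : MvPolynomial.coeff (mex 0 0 1) (τ 0 0) = 0 := congrFun h0 3
  have F4 : MvPolynomial.coeff (mex 1 1 0) (τ 0 0) = 0 := congrFun h0 4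
  have F5 : MvPolynomial.coeff (mex 0 1 1) (τ 0 0) = 0 := congrFun h0 5
  have F6 : MvPolynomial.coeff (mex 0 0 0) (τ 1 1) = 0 := congrFun h0 6
  have F7 : MvPolynomial.coeff (mex 1 0 0) (τ 1 1) = 0 := congrFun h0 7
  have F8 : MvPolynomial.coeff (mex 0 1 0) (τ 1 1) = 0 := congrFun h0 8
  have F9 : MvPolynomial.coeff (mex 0 0 1) (τ 1 1) = 0 := congrFun h0 9
  have F10 : MvPolynomial.coeff (mex 1 0 1) (τ 1 1) = 0 := congrFun h0 10
  have F11 : MvPolynomial.coeff (mex 0 1 1) (τ 1 1) = 0 := congrFun h0 11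
  have F12 : MvPolynomial.coeff (mex 0 0 0) (τ 2 2) = 0 := congrFun h0 12
  have F13 : MvPolynomial.coeff (mex 1 0 0) (τ 2 2) = 0 := congrFun h0 13
  have F14 : MvPolynomial.coeff (mex 0 1 0) (τ 2 2) = 0 := congrFun h0 14
  have F15 : MvPolynomial.coeff (mex 0 0 1) (τ 2 2) = 0 := congrFun h0 15
  have F16 : MvPolynomial.coeff (mex 1 1 0) (τ 2 2) = 0 := congrFun h0 16
  have F17 : MvPolynomial.coeff (mex 1 0 1) (τ 2 2) = 0 := congrFun h0 17
  have F18 : MvPolynomial.coeff (mex 0 0 0) (τ 0 1) = 0 := congrFun h0 18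
  have F19 : MvPolynomial.coeff (mex 0 0 1) (τ 0 1) = 0 := congrFun h0 19
  have F20 : MvPolynomial.coeff (mex 0 1 0) (τ 0 1) = 0 := congrFun h0 20
  have F21 : MvPolynomial.coeff (mex 0 1 1) (τ 0 1) = 0 := congrFun h0 21
  have F22 : MvPolynomial.coeff (mex 0 2 0) (τ 0 1) = 0 := congrFun h0 22
  have F23 : MvPolynomial.coeff (mex 0 2 1) (τ 0 1) = 0 := congrFun h0 23
  have F24 : MvPolynomial.coeff (mex 1 0 0) (τ 0 1) = 0 := congrFun h0 24
  have F25 : MvPolynomial.coeff (mex 1 0 1) (τ 0 1) = 0 := congrFun h0 25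
  have F26 : MvPolynomial.coeff (mex 1 1 0) (τ 0 1) = 0 := congrFun h0 26
  have F27 : MvPolynomial.coeff (mex 1 1 1) (τ 0 1) = 0 := congrFun h0 27
  have F28 : MvPolynomial.coeff (mex 1 2 0) (τ 0 1) = 0 := congrFun h0 28
  have F29 : MvPolynomial.coeff (mex 1 2 1) (τ 0 1) = 0 := congrFun h0 29
  have F30 : MvPolynomial.coeff (mex 2 0 0) (τ 0 1) = 0 := congrFun h0 30
  have F31 : MvPolynomial.coeff (mex 2 0 1) (τ 0 1) = 0 := congrFun h0 31
  have F32 : MvPolynomial.coeff (mex 2 1 0) (τ 0 1) = 0 := congrFun h0 32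
  have F33 : MvPolynomial.coeff (mex 2 1 1) (τ 0 1) = 0 := congrFun h0 33
  have F34 : MvPolynomial.coeff (mex 2 2 0) (τ 0 1) = 0 := congrFun h0 34
  have F35 : MvPolynomial.coeff (mex 2 2 1) (τ 0 1) = 0 := congrFun h0 35
  have F36 : MvPolynomial.coeff (mex 0 0 0) (τ 0 2) = 0 := congrFun h0 36
  have F37 : MvPolynomial.coeff (mex 0 0 1) (τ 0 2) = 0 := congrFun h0 37
  have F38 : MvPolynomial.coeff (mex 0 0 2) (τ 0 2) = 0 := congrFun h0 38
  have F39 : MvPolynomial.coeff (mex 0 1 0) (τ 0 2) = 0 := congrFun h0 39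
  have F40 : MvPolynomial.coeff (mex 0 1 1) (τ 0 2) = 0 := congrFun h0 40
  have F41 : MvPolynomial.coeff (mex 0 1 2) (τ 0 2) = 0 := congrFun h0 41
  have F42 : MvPolynomial.coeff (mex 1 0 0) (τ 0 2) = 0 := congrFun h0 42
  have F43 : MvPolynomial.coeff (mex 1 0 1) (τ 0 2) = 0 := congrFun h0 43
  have F44 : MvPolynomial.coeff (mex 1 0 2) (τ 0 2) = 0 := congrFun h0 44
  have F45 : MvPolynomial.coeff (mex 1 1 0) (τ 0 2) = 0 := congrFun h0 45
  have F46 : MvPolynomial.coeff (mex 1 1 1) (τ 0 2) = 0 := congrFun h0 46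
  have F47 : MvPolynomial.coeff (mex 1 1 2) (τ 0 2) = 0 := congrFun h0 47
  have F48 : MvPolynomial.coeff (mex 2 0 0) (τ 0 2) = 0 := congrFun h0 48
  have F49 : MvPolynomial.coeff (mex 2 0 1) (τ 0 2) = 0 := congrFun h0 49
  have F50 : MvPolynomial.coeff (mex 2 0 2) (τ 0 2) = 0 := congrFun h0 50
  have F51 : MvPolynomial.coeff (mex 2 1 0) (τ 0 2) = 0 := congrFun h0 51
  have F52 : MvPolynomial.coeff (mex 2 1 1) (τ 0 2) = 0 := congrFun h0 52
  have F53 : MvPolynomial.coeff (mex 2 1 2) (τ 0 2) = 0 := congrFun h0 53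
  have F54 : MvPolynomial.coeff (mex 0 0 0) (τ 1 2) = 0 := congrFun h0 54
  have F55 : MvPolynomial.coeff (mex 0 0 1) (τ 1 2) = 0 := congrFun h0 55
  have F56 : MvPolynomial.coeff (mex 0 0 2) (τ 1 2) = 0 := congrFun h0 56
  have F57 : MvPolynomial.coeff (mex 0 1 0) (τ 1 2) = 0 := congrFun h0 57
  have F58 : MvPolynomial.coeff (mex 0 1 1) (τ 1 2) = 0 := congrFun h0 58
  have F59 : MvPolynomial.coeff (mex 0 1 2) (τ 1 2) = 0 := congrFun h0 59
  have F60 : MvPolynomial.coeff (mex 0 2 0) (τ 1 2) = 0 := congrFun h0 60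
  have F61 : MvPolynomial.coeff (mex 0 2 1) (τ 1 2) = 0 := congrFun h0 61
  have F62 : MvPolynomial.coeff (mex 0 2 2) (τ 1 2) = 0 := congrFun h0 62
  have F63 : MvPolynomial.coeff (mex 1 0 0) (τ 1 2) = 0 := congrFun h0 63
  have F64 : MvPolynomial.coeff (mex 1 0 1) (τ 1 2) = 0 := congrFun h0 64
  have F65 : MvPolynomial.coeff (mex 1 0 2) (τ 1 2) = 0 := congrFun h0 65
  have F66 : MvPolynomial.coeff (mex 1 1 0) (τ 1 2) = 0 := congrFun h0 66
  have F67 : MvPolynomial.coeff (mex 1 1 1) (τ 1 2) = 0 := congrFun h0 67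
  have F68 : MvPolynomial.coeff (mex 1 1 2) (τ 1 2) = 0 := congrFun h0 68
  have F69 : MvPolynomial.coeff (mex 1 2 0) (τ 1 2) = 0 := congrFun h0 69
  have F70 : MvPolynomial.coeff (mex 1 2 1) (τ 1 2) = 0 := congrFun h0 70
  have F71 : MvPolynomial.coeff (mex 1 2 2) (τ 1 2) = 0 := congrFun h0 71
  have P0 : MvPolynomial.coeff (mex 2 0 0) (τ 0 0) = 0 := by
    have e : MvPolynomial.coeff (mex 1 0 0) (pderiv 0 (τ 0 0) + pderiv 1 (τ 0 1) + pderiv 2 (τ 0 2))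
        = MvPolynomial.coeff (mex 1 0 0) (rigid v w 0) := by rw [← hd0, hvw]
    simp [coeff_pderiv0_mex, coeff_pderiv1_mex, coeff_pderiv2_mex, rigid_eq0, rigid_eq1, rigid_eq2, F26, F43] at e
    first
      | linarith [e]
      | (norm_num at e; linarith [e])
  have P1 : MvPolynomial.coeff (mex 3 0 0) (τ 0 0) = 0 := by
    have e : MvPolynomial.coeff (mex 2 0 0) (pderiv 0 (τ 0 0) + pderiv 1 (τ 0 1) + pderiv 2 (τ 0 2))
        = MvPolynomial.coeff (mex 2 0 0) (rigid v w 0) := by rw [← hd0, hvw]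
    simp [coeff_pderiv0_mex, coeff_pderiv1_mex, coeff_pderiv2_mex, rigid_eq0, rigid_eq1, rigid_eq2, F32, F49] at e
    first
      | linarith [e]
      | (norm_num at e; linarith [e])
  have P2 : MvPolynomial.coeff (mex 2 1 0) (τ 0 0) = 0 := by
    have e : MvPolynomial.coeff (mex 1 1 0) (pderiv 0 (τ 0 0) + pderiv 1 (τ 0 1) + pderiv 2 (τ 0 2))
        = MvPolynomial.coeff (mex 1 1 0) (rigid v w 0) := by rw [← hd0, hvw]
    simp [coeff_pderiv0_mex, coeff_pderiv1_mex, coeff_pderiv2_mex, rigid_eq0, rigid_eq1, rigid_eq2, F28, F46] at e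
    first
      | linarith [e]
      | (norm_num at e; linarith [e])
  have P3 : MvPolynomial.coeff (mex 2 0 1) (τ 0 0) = 0 := by
    have e : MvPolynomial.coeff (mex 1 0 1) (pderiv 0 (τ 0 0) + pderiv 1 (τ 0 1) + pderiv 2 (τ 0 2))
        = MvPolynomial.coeff (mex 1 0 1) (rigid v w 0) := by rw [← hd0, hvw]
    simp [coeff_pderiv0_mex, coeff_pderiv1_mex, coeff_pderiv2_mex, rigid_eq0, rigid_eq1, rigid_eq2, F27, F44] at e
    first
      | linarith [e]
      | (norm_num at e; linarith [e])
  have P4 : MvPolynomial.coeff (mex 1 1 1) (τ 0 0) = 0 := by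
    have e : MvPolynomial.coeff (mex 0 1 1) (pderiv 0 (τ 0 0) + pderiv 1 (τ 0 1) + pderiv 2 (τ 0 2))
        = MvPolynomial.coeff (mex 0 1 1) (rigid v w 0) := by rw [← hd0, hvw]
    simp [coeff_pderiv0_mex, coeff_pderiv1_mex, coeff_pderiv2_mex, rigid_eq0, rigid_eq1, rigid_eq2, F23, F41] at e
    first
      | linarith [e]
      | (norm_num at e; linarith [e])
  have P5 : MvPolynomial.coeff (mex 3 1 0) (τ 0 0) = 0 := by
    have e : MvPolynomial.coeff (mex 2 1 0) (pderiv 0 (τ 0 0) + pderiv 1 (τ 0 1) + pderiv 2 (τ 0 2))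
        = MvPolynomial.coeff (mex 2 1 0) (rigid v w 0) := by rw [← hd0, hvw]
    simp [coeff_pderiv0_mex, coeff_pderiv1_mex, coeff_pderiv2_mex, rigid_eq0, rigid_eq1, rigid_eq2, F34, F52] at e
    first
      | linarith [e]
      | (norm_num at e; linarith [e])
  have P6 : MvPolynomial.coeff (mex 3 0 1) (τ 0 0) = 0 := by
    have e : MvPolynomial.coeff (mex 2 0 1) (pderiv 0 (τ 0 0) + pderiv 1 (τ 0 1) + pderiv 2 (τ 0 2))
        = MvPolynomial.coeff (mex 2 0 1) (rigid v w 0) := by rw [← hd0, hvw]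
    simp [coeff_pderiv0_mex, coeff_pderiv1_mex, coeff_pderiv2_mex, rigid_eq0, rigid_eq1, rigid_eq2, F33, F50] at e
    first
      | linarith [e]
      | (norm_num at e; linarith [e])
  have P7 : MvPolynomial.coeff (mex 2 1 1) (τ 0 0) = 0 := by
    have e : MvPolynomial.coeff (mex 1 1 1) (pderiv 0 (τ 0 0) + pderiv 1 (τ 0 1) + pderiv 2 (τ 0 2))
        = MvPolynomial.coeff (mex 1 1 1) (rigid v w 0) := by rw [← hd0, hvw]
    simp [coeff_pderiv0_mex, coeff_pderiv1_mex, coeff_pderiv2_mex, rigid_eq0, rigid_eq1, rigid_eq2, F29, F47] at e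
    first
      | linarith [e]
      | (norm_num at e; linarith [e])
  have P8 : MvPolynomial.coeff (mex 3 1 1) (τ 0 0) = 0 := by
    have e : MvPolynomial.coeff (mex 2 1 1) (pderiv 0 (τ 0 0) + pderiv 1 (τ 0 1) + pderiv 2 (τ 0 2))
        = MvPolynomial.coeff (mex 2 1 1) (rigid v w 0) := by rw [← hd0, hvw]
    simp [coeff_pderiv0_mex, coeff_pderiv1_mex, coeff_pderiv2_mex, rigid_eq0, rigid_eq1, rigid_eq2, F35, F53] at e
    first
      | linarith [e]
      | (norm_num at e; linarith [e])
  have P9 : MvPolynomial.coeff (mex 0 2 0) (τ 1 1) = 0 := by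
    have e : MvPolynomial.coeff (mex 0 1 0) (pderiv 0 (τ 0 1) + pderiv 1 (τ 1 1) + pderiv 2 (τ 1 2))
        = MvPolynomial.coeff (mex 0 1 0) (rigid v w 1) := by rw [← hd1, hvw]
    simp [coeff_pderiv0_mex, coeff_pderiv1_mex, coeff_pderiv2_mex, rigid_eq0, rigid_eq1, rigid_eq2, F26, F58] at e
    first
      | linarith [e]
      | (norm_num at e; linarith [e])
  have P10 : MvPolynomial.coeff (mex 0 3 0) (τ 1 1) = 0 := by
    have e : MvPolynomial.coeff (mex 0 2 0) (pderiv 0 (τ 0 1) + pderiv 1 (τ 1 1) + pderiv 2 (τ 1 2))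
        = MvPolynomial.coeff (mex 0 2 0) (rigid v w 1) := by rw [← hd1, hvw]
    simp [coeff_pderiv0_mex, coeff_pderiv1_mex, coeff_pderiv2_mex, rigid_eq0, rigid_eq1, rigid_eq2, F28, F61] at e
    first
      | linarith [e]
      | (norm_num at e; linarith [e])
  have P11 : MvPolynomial.coeff (mex 1 2 0) (τ 1 1) = 0 := by
    have e : MvPolynomial.coeff (mex 1 1 0) (pderiv 0 (τ 0 1) + pderiv 1 (τ 1 1) + pderiv 2 (τ 1 2))
        = MvPolynomial.coeff (mex 1 1 0) (rigid v w 1) := by rw [← hd1, hvw]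
    simp [coeff_pderiv0_mex, coeff_pderiv1_mex, coeff_pderiv2_mex, rigid_eq0, rigid_eq1, rigid_eq2, F32, F67] at e
    first
      | linarith [e]
      | (norm_num at e; linarith [e])
  have P12 : MvPolynomial.coeff (mex 0 2 1) (τ 1 1) = 0 := by
    have e : MvPolynomial.coeff (mex 0 1 1) (pderiv 0 (τ 0 1) + pderiv 1 (τ 1 1) + pderiv 2 (τ 1 2))
        = MvPolynomial.coeff (mex 0 1 1) (rigid v w 1) := by rw [← hd1, hvw]
    simp [coeff_pderiv0_mex, coeff_pderiv1_mex, coeff_pderiv2_mex, rigid_eq0, rigid_eq1, rigid_eq2, F27, F59] at e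
    first
      | linarith [e]
      | (norm_num at e; linarith [e])
  have P13 : MvPolynomial.coeff (mex 1 1 1) (τ 1 1) = 0 := by
    have e : MvPolynomial.coeff (mex 1 0 1) (pderiv 0 (τ 0 1) + pderiv 1 (τ 1 1) + pderiv 2 (τ 1 2))
        = MvPolynomial.coeff (mex 1 0 1) (rigid v w 1) := by rw [← hd1, hvw]
    simp [coeff_pderiv0_mex, coeff_pderiv1_mex, coeff_pderiv2_mex, rigid_eq0, rigid_eq1, rigid_eq2, F31, F65] at e
    first
      | linarith [e]
      | (norm_num at e; linarith [e])
  have P14 : MvPolynomial.coeff (mex 1 3 0) (τ 1 1) = 0 := by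
    have e : MvPolynomial.coeff (mex 1 2 0) (pderiv 0 (τ 0 1) + pderiv 1 (τ 1 1) + pderiv 2 (τ 1 2))
        = MvPolynomial.coeff (mex 1 2 0) (rigid v w 1) := by rw [← hd1, hvw]
    simp [coeff_pderiv0_mex, coeff_pderiv1_mex, coeff_pderiv2_mex, rigid_eq0, rigid_eq1, rigid_eq2, F34, F70] at e
    first
      | linarith [e]
      | (norm_num at e; linarith [e])
  have P15 : MvPolynomial.coeff (mex 0 3 1) (τ 1 1) = 0 := by
    have e : MvPolynomial.coeff (mex 0 2 1) (pderiv 0 (τ 0 1) + pderiv 1 (τ 1 1) + pderiv 2 (τ 1 2))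
        = MvPolynomial.coeff (mex 0 2 1) (rigid v w 1) := by rw [← hd1, hvw]
    simp [coeff_pderiv0_mex, coeff_pderiv1_mex, coeff_pderiv2_mex, rigid_eq0, rigid_eq1, rigid_eq2, F29, F62] at e
    first
      | linarith [e]
      | (norm_num at e; linarith [e])
  have P16 : MvPolynomial.coeff (mex 1 2 1) (τ 1 1) = 0 := by
    have e : MvPolynomial.coeff (mex 1 1 1) (pderiv 0 (τ 0 1) + pderiv 1 (τ 1 1) + pderiv 2 (τ 1 2))
        = MvPolynomial.coeff (mex 1 1 1) (rigid v w 1) := by rw [← hd1, hvw]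
    simp [coeff_pderiv0_mex, coeff_pderiv1_mex, coeff_pderiv2_mex, rigid_eq0, rigid_eq1, rigid_eq2, F33, F68] at e
    first
      | linarith [e]
      | (norm_num at e; linarith [e])
  have P17 : MvPolynomial.coeff (mex 1 3 1) (τ 1 1) = 0 := by
    have e : MvPolynomial.coeff (mex 1 2 1) (pderiv 0 (τ 0 1) + pderiv 1 (τ 1 1) + pderiv 2 (τ 1 2))
        = MvPolynomial.coeff (mex 1 2 1) (rigid v w 1) := by rw [← hd1, hvw]
    simp [coeff_pderiv0_mex, coeff_pderiv1_mex, coeff_pderiv2_mex, rigid_eq0, rigid_eq1, rigid_eq2, F35, F71] at e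
    first
      | linarith [e]
      | (norm_num at e; linarith [e])
  have P18 : MvPolynomial.coeff (mex 0 0 2) (τ 2 2) = 0 := by
    have e : MvPolynomial.coeff (mex 0 0 1) (pderiv 0 (τ 0 2) + pderiv 1 (τ 1 2) + pderiv 2 (τ 2 2))
        = MvPolynomial.coeff (mex 0 0 1) (rigid v w 2) := by rw [← hd2, hvw]
    simp [coeff_pderiv0_mex, coeff_pderiv1_mex, coeff_pderiv2_mex, rigid_eq0, rigid_eq1, rigid_eq2, F43, F58] at e
    first
      | linarith [e]
      | (norm_num at e; linarith [e])
  have P19 : MvPolynomial.coeff (mex 0 0 3) (τ 2 2) = 0 := by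
    have e : MvPolynomial.coeff (mex 0 0 2) (pderiv 0 (τ 0 2) + pderiv 1 (τ 1 2) + pderiv 2 (τ 2 2))
        = MvPolynomial.coeff (mex 0 0 2) (rigid v w 2) := by rw [← hd2, hvw]
    simp [coeff_pderiv0_mex, coeff_pderiv1_mex, coeff_pderiv2_mex, rigid_eq0, rigid_eq1, rigid_eq2, F44, F59] at e
    first
      | linarith [e]
      | (norm_num at e; linarith [e])
  have P20 : MvPolynomial.coeff (mex 1 0 2) (τ 2 2) = 0 := by
    have e : MvPolynomial.coeff (mex 1 0 1) (pderiv 0 (τ 0 2) + pderiv 1 (τ 1 2) + pderiv 2 (τ 2 2))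
        = MvPolynomial.coeff (mex 1 0 1) (rigid v w 2) := by rw [← hd2, hvw]
    simp [coeff_pderiv0_mex, coeff_pderiv1_mex, coeff_pderiv2_mex, rigid_eq0, rigid_eq1, rigid_eq2, F49, F67] at e
    first
      | linarith [e]
      | (norm_num at e; linarith [e])
  have P21 : MvPolynomial.coeff (mex 0 1 2) (τ 2 2) = 0 := by
    have e : MvPolynomial.coeff (mex 0 1 1) (pderiv 0 (τ 0 2) + pderiv 1 (τ 1 2) + pderiv 2 (τ 2 2))
        = MvPolynomial.coeff (mex 0 1 1) (rigid v w 2) := by rw [← hd2, hvw]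
    simp [coeff_pderiv0_mex, coeff_pderiv1_mex, coeff_pderiv2_mex, rigid_eq0, rigid_eq1, rigid_eq2, F46, F61] at e
    first
      | linarith [e]
      | (norm_num at e; linarith [e])
  have P22 : MvPolynomial.coeff (mex 1 1 1) (τ 2 2) = 0 := by
    have e : MvPolynomial.coeff (mex 1 1 0) (pderiv 0 (τ 0 2) + pderiv 1 (τ 1 2) + pderiv 2 (τ 2 2))
        = MvPolynomial.coeff (mex 1 1 0) (rigid v w 2) := by rw [← hd2, hvw]
    simp [coeff_pderiv0_mex, coeff_pderiv1_mex, coeff_pderiv2_mex, rigid_eq0, rigid_eq1, rigid_eq2, F51, F69] at e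
    first
      | linarith [e]
      | (norm_num at e; linarith [e])
  have P23 : MvPolynomial.coeff (mex 1 0 3) (τ 2 2) = 0 := by
    have e : MvPolynomial.coeff (mex 1 0 2) (pderiv 0 (τ 0 2) + pderiv 1 (τ 1 2) + pderiv 2 (τ 2 2))
        = MvPolynomial.coeff (mex 1 0 2) (rigid v w 2) := by rw [← hd2, hvw]
    simp [coeff_pderiv0_mex, coeff_pderiv1_mex, coeff_pderiv2_mex, rigid_eq0, rigid_eq1, rigid_eq2, F50, F68] at e
    first
      | linarith [e]
      | (norm_num at e; linarith [e])
  have P24 : MvPolynomial.coeff (mex 0 1 3) (τ 2 2) = 0 := by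
    have e : MvPolynomial.coeff (mex 0 1 2) (pderiv 0 (τ 0 2) + pderiv 1 (τ 1 2) + pderiv 2 (τ 2 2))
        = MvPolynomial.coeff (mex 0 1 2) (rigid v w 2) := by rw [← hd2, hvw]
    simp [coeff_pderiv0_mex, coeff_pderiv1_mex, coeff_pderiv2_mex, rigid_eq0, rigid_eq1, rigid_eq2, F47, F62] at e
    first
      | linarith [e]
      | (norm_num at e; linarith [e])
  have P25 : MvPolynomial.coeff (mex 1 1 2) (τ 2 2) = 0 := by
    have e : MvPolynomial.coeff (mex 1 1 1) (pderiv 0 (τ 0 2) + pderiv 1 (τ 1 2) + pderiv 2 (τ 2 2))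
        = MvPolynomial.coeff (mex 1 1 1) (rigid v w 2) := by rw [← hd2, hvw]
    simp [coeff_pderiv0_mex, coeff_pderiv1_mex, coeff_pderiv2_mex, rigid_eq0, rigid_eq1, rigid_eq2, F52, F70] at e
    first
      | linarith [e]
      | (norm_num at e; linarith [e])
  have P26 : MvPolynomial.coeff (mex 1 1 3) (τ 2 2) = 0 := by
    have e : MvPolynomial.coeff (mex 1 1 2) (pderiv 0 (τ 0 2) + pderiv 1 (τ 1 2) + pderiv 2 (τ 2 2))
        = MvPolynomial.coeff (mex 1 1 2) (rigid v w 2) := by rw [← hd2, hvw]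
    simp [coeff_pderiv0_mex, coeff_pderiv1_mex, coeff_pderiv2_mex, rigid_eq0, rigid_eq1, rigid_eq2, F53, F71] at e
    first
      | linarith [e]
      | (norm_num at e; linarith [e])
  have P27 : MvPolynomial.coeff (mex 1 1 0) (τ 1 1) = 0 := by
    have e1 : MvPolynomial.coeff (mex 0 1 0) (pderiv 0 (τ 0 0) + pderiv 1 (τ 0 1) + pderiv 2 (τ 0 2))
        = MvPolynomial.coeff (mex 0 1 0) (rigid v w 0) := by rw [← hd0, hvw]
    have e2 : MvPolynomial.coeff (mex 1 0 0) (pderiv 0 (τ 0 1) + pderiv 1 (τ 1 1) + pderiv 2 (τ 1 2))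
        = MvPolynomial.coeff (mex 1 0 0) (rigid v w 1) := by rw [← hd1, hvw]
    simp [coeff_pderiv0_mex, coeff_pderiv1_mex, coeff_pderiv2_mex, rigid_eq0, rigid_eq1, rigid_eq2, F4, F22, F40, F30, F64] at e1 e2
    first | (norm_num at e1) | skip
    first | (norm_num at e2) | skip
    linarith [e1, e2]
  have P28 : MvPolynomial.coeff (mex 0 1 1) (τ 2 2) = 0 := by
    have e1 : MvPolynomial.coeff (mex 0 0 1) (pderiv 0 (τ 0 1) + pderiv 1 (τ 1 1) + pderiv 2 (τ 1 2))
        = MvPolynomial.coeff (mex 0 0 1) (rigid v w 1) := by rw [← hd1, hvw]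
    have e2 : MvPolynomial.coeff (mex 0 1 0) (pderiv 0 (τ 0 2) + pderiv 1 (τ 1 2) + pderiv 2 (τ 2 2))
        = MvPolynomial.coeff (mex 0 1 0) (rigid v w 2) := by rw [← hd2, hvw]
    simp [coeff_pderiv0_mex, coeff_pderiv1_mex, coeff_pderiv2_mex, rigid_eq0, rigid_eq1, rigid_eq2, F25, F11, F56, F45, F60] at e1 e2
    first | (norm_num at e1) | skip
    first | (norm_num at e2) | skip
    linarith [e1, e2]
  have P29 : MvPolynomial.coeff (mex 1 0 1) (τ 0 0) = 0 := by
    have e1 : MvPolynomial.coeff (mex 0 0 1) (pderiv 0 (τ 0 0) + pderiv 1 (τ 0 1) + pderiv 2 (τ 0 2))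
        = MvPolynomial.coeff (mex 0 0 1) (rigid v w 0) := by rw [← hd0, hvw]
    have e2 : MvPolynomial.coeff (mex 1 0 0) (pderiv 0 (τ 0 2) + pderiv 1 (τ 1 2) + pderiv 2 (τ 2 2))
        = MvPolynomial.coeff (mex 1 0 0) (rigid v w 2) := by rw [← hd2, hvw]
    simp [coeff_pderiv0_mex, coeff_pderiv1_mex, coeff_pderiv2_mex, rigid_eq0, rigid_eq1, rigid_eq2, F21, F38, F48, F66, F17] at e1 e2
    first | (norm_num at e1) | skip
    first | (norm_num at e2) | skip
    linarith [e1, e2]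
  have z00 : τ 0 0 = 0 := poly_eq_zero _ 3 1 1 h1 (by
    intro a b c ha hb hc
    interval_cases a <;> interval_cases b <;> interval_cases c <;> assumption)
  have z11 : τ 1 1 = 0 := poly_eq_zero _ 1 3 1 h2 (by
    intro a b c ha hb hc
    interval_cases a <;> interval_cases b <;> interval_cases c <;> assumption)
  have z22 : τ 2 2 = 0 := poly_eq_zero _ 1 1 3 h3 (by
    intro a b c ha hb hc
    interval_cases a <;> interval_cases b <;> interval_cases c <;> assumption)
  have z01 : τ 0 1 = 0 := poly_eq_zero _ 2 2 1 h4 (by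
    intro a b c ha hb hc
    interval_cases a <;> interval_cases b <;> interval_cases c <;> assumption)
  have z02 : τ 0 2 = 0 := poly_eq_zero _ 2 1 2 h5 (by
    intro a b c ha hb hc
    interval_cases a <;> interval_cases b <;> interval_cases c <;> assumption)
  have z12 : τ 1 2 = 0 := poly_eq_zero _ 1 2 2 h6 (by
    intro a b c ha hb hc
    interval_cases a <;> interval_cases b <;> interval_cases c <;> assumption)
  funext p q
  fin_cases p <;> fin_cases q
  exacts [z00, z01, z02, (hsym 1 0).trans z01, z11, z12, (hsym 2 0).trans z02,
    (hsym 2 1).trans z12, z22]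

/-- The space `{τ ∈ S₂ : div τ ∈ T}`, with `T` the space of rigid body motions,
has dimension 72. -/
theorem finrank_SigmaT : Module.finrank ℝ SigmaT = 72 := by
  have hinj : Function.Injective (Rmap.domRestrict SigmaT) := by
    intro x y hxy
    apply Subtype.ext
    have hz : Rmap ((x : Mat3) - (y : Mat3)) = 0 := by
      rw [map_sub, sub_eq_zero]
      simpa [LinearMap.domRestrict_apply] using hxy
    have hst := sig_inj ((x : Mat3) - (y : Mat3)) (SigmaT.sub_mem x.2 y.2) hz
    exact sub_eq_zero.mp hst
  have hsurj : Function.Surjective (Rmap.domRestrict SigmaT) := by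
    intro cvec
    exact ⟨⟨phi cvec, phi_mem cvec⟩, Rmap_phi cvec⟩
  have e := LinearEquiv.ofBijective (Rmap.domRestrict SigmaT) ⟨hinj, hsurj⟩
  rw [e.finrank_eq]
  simp [Module.finrank_fintype_fun_eq_card]


end
end
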